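/- Let A₁₁, A₁₂, A₂₂ be Riccati data on a complex separable Hilbert space H, with δ > 0 such that diag{A₁₁} − A₂₂ ≥ δ·I. Define the sequence s₀ = A₁₁ and s_{n+1} = A₁₁ + A₁₂(diag{sₙ} − A₂₂)⁻¹A₁₂* whenever the inverse exists. Then for every n the operator sₙ is well defined and selfadjoint, sₙ ≥ A₁₁ = s₀, and diag{sₙ} − A₂₂ ≥ δ·I (in particular diag{sₙ} − A₂₂ is strongly positive, hence boundedly invertible), so the recursion never breaks down. -/

import Mathlib

open MeasureTheory ContinuousLinearMap Filter
open scoped ENNReal NNReal Topology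

noncomputable section

/-- `ℓ²(H)`: the Hilbert space of square-summable sequences in `H`, indexed by `ℕ`
(index `k : ℕ` corresponds to the `(k+1)`-st entry in the paper's `1`-based indexing). -/
abbrev l2 (H : Type*) [NormedAddCommGroup H] [InnerProductSpace ℂ H] : Type _ :=
  lp (fun _ : ℕ => H) 2

variable {H : Type*} [NormedAddCommGroup H] [InnerProductSpace ℂ H]

lemma memℓp_diag (q : H →L[ℂ] H) (ξ : l2 H) : Memℓp (fun k => q (ξ k)) 2 := by
  have h2 : (0:ℝ) < (2 : ℝ≥0∞).toReal := by norm_num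
  apply memℓp_gen
  have hs : Summable (fun k => ‖q‖ ^ (2 : ℝ≥0∞).toReal * ‖ξ k‖ ^ (2 : ℝ≥0∞).toReal) :=
    ((lp.memℓp ξ).summable h2).mul_left _
  refine Summable.of_nonneg_of_le (fun k => ?_) (fun k => ?_) hs
  · positivity
  · rw [← Real.mul_rpow (norm_nonneg _) (norm_nonneg _)]
    exact Real.rpow_le_rpow (norm_nonneg _) (q.le_opNorm _) (by norm_num)

/-- `diag{q}`: the bounded block-diagonal operator on `ℓ²(H)` acting componentwise,
`(diag{q} ξ)ₖ = q (ξₖ)`. -/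
def diagOp (q : H →L[ℂ] H) : l2 H →L[ℂ] l2 H :=
  LinearMap.mkContinuous
    { toFun := fun ξ => ⟨fun k => q (ξ k), memℓp_diag q ξ⟩
      map_add' := fun ξ η => by ext k; simp [lp.coeFn_add]; rfl
      map_smul' := fun c ξ => by ext k; simp [lp.coeFn_smul] }
    ‖q‖
    (by
      intro ξ
      have h2 : (0:ℝ) < (2 : ℝ≥0∞).toReal := by norm_num
      refine lp.norm_le_of_tsum_le h2 (by positivity) ?_
      have hξ : ‖ξ‖ ^ (2 : ℝ≥0∞).toReal = ∑' k, ‖ξ k‖ ^ (2 : ℝ≥0∞).toReal :=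
        lp.norm_rpow_eq_tsum h2 ξ
      have hsum : Summable (fun k => ‖ξ k‖ ^ (2 : ℝ≥0∞).toReal) := (lp.memℓp ξ).summable h2
      calc ∑' k, ‖(fun k => q (ξ k)) k‖ ^ (2 : ℝ≥0∞).toReal
          ≤ ∑' k, ‖q‖ ^ (2 : ℝ≥0∞).toReal * ‖ξ k‖ ^ (2 : ℝ≥0∞).toReal := by
            refine Summable.tsum_le_tsum (fun k => ?_) ?_ (hsum.mul_left _)
            · rw [← Real.mul_rpow (norm_nonneg _) (norm_nonneg _)]
              exact Real.rpow_le_rpow (norm_nonneg _) (q.le_opNorm _) (by norm_num)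
            · refine Summable.of_nonneg_of_le (fun k => ?_) (fun k => ?_)
                (hsum.mul_left (‖q‖ ^ (2 : ℝ≥0∞).toReal))
              · positivity
              · rw [← Real.mul_rpow (norm_nonneg _) (norm_nonneg _)]
                exact Real.rpow_le_rpow (norm_nonneg _) (q.le_opNorm _) (by norm_num)
        _ = (‖q‖ * ‖ξ‖) ^ (2 : ℝ≥0∞).toReal := by
            rw [tsum_mul_left, ← hξ, Real.mul_rpow (norm_nonneg _) (norm_nonneg _)])

@[simp] lemma diagOp_apply (q : H →L[ℂ] H) (ξ : l2 H) (k : ℕ) :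
    (diagOp q ξ) k = q (ξ k) := rfl

/-- An operator is *strongly positive* (written `ρ ≫ 0` in the paper) if `δ • I ≤ ρ`
(Loewner order) for some `δ > 0`.  A strongly positive operator is boundedly invertible. -/
def StronglyPositive {E : Type*} [NormedAddCommGroup E] [InnerProductSpace ℂ E]
    [CompleteSpace E] (ρ : E →L[ℂ] E) : Prop :=
  ∃ δ : ℝ, 0 < δ ∧ δ • (1 : E →L[ℂ] E) ≤ ρ

variable [CompleteSpace H]

/-- The Riccati map `ℱ(s) = A₁₁ + A₁₂ (diag{s} − A₂₂)⁻¹ A₁₂*`.  Here `Ring.inverse` is the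
genuine inverse whenever `diag{s} − A₂₂` is boundedly invertible, which is guaranteed when
`diag{s} − A₂₂ ≫ 0`. -/
def riccatiMap (A11 : H →L[ℂ] H) (A12 : l2 H →L[ℂ] H) (A22 : l2 H →L[ℂ] l2 H)
    (s : H →L[ℂ] H) : H →L[ℂ] H :=
  A11 + A12 ∘L Ring.inverse (diagOp s - A22) ∘L ContinuousLinearMap.adjoint A12

/-- The successive approximations `s₀ = A₁₁`, `s_{n+1} = ℱ(sₙ)`. -/
def riccatiSeq (A11 : H →L[ℂ] H) (A12 : l2 H →L[ℂ] H) (A22 : l2 H →L[ℂ] l2 H) :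
    ℕ → (H →L[ℂ] H)
  | 0 => A11
  | n + 1 => riccatiMap A11 A12 A22 (riccatiSeq A11 A12 A22 n)

end

/-! `q ↦ diag{q}` is a unital `⋆`-homomorphism, hence monotone. The Riccati map satisfies
`ℱ(s) ≥ A₁₁` whenever `diag{s} − A₂₂ ≥ 0`, because then `(diag{s} − A₂₂)⁻¹ ≥ 0` and so
`A₁₂ (diag{s} − A₂₂)⁻¹ A₁₂* ≥ 0`. By induction `sₙ ≥ A₁₁` for all `n`, whence
`diag{sₙ} − A₂₂ ≥ diag{A₁₁} − A₂₂ ≥ δ·I`, which makes `diag{sₙ} − A₂₂` strictly positive and in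
particular invertible; `sₙ` is selfadjoint as the sum of `A₁₁` and the positive `sₙ − A₁₁`. -/

section CStarAlgebra

variable {A : Type*} [CStarAlgebra A] [PartialOrder A] [StarOrderedRing A]

lemma ringInverse_nonneg {a : A} (ha : 0 ≤ a) : 0 ≤ Ring.inverse a := by
  by_cases hu : IsUnit a
  · exact (hu.isStrictlyPositive ha).ringInverse.nonneg
  · rw [Ring.inverse_non_unit a hu]

lemma isStrictlyPositive_of_smul_one_le {a : A} {δ : ℝ} (hδ : 0 < δ) (h : δ • 1 ≤ a) :
    IsStrictlyPositive a :=
  (IsStrictlyPositive.smul hδ isStrictlyPositive_one).of_le h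

end CStarAlgebra

section HilbertSpace

variable {H : Type*} [NormedAddCommGroup H] [InnerProductSpace ℂ H] [CompleteSpace H]

lemma diagOp_adjoint (q : H →L[ℂ] H) : adjoint (diagOp q) = diagOp (adjoint q) := by
  refine ((eq_adjoint_iff _ _).mpr fun ξ η => ?_).symm
  rw [lp.inner_eq_tsum, lp.inner_eq_tsum]
  exact tsum_congr fun k => adjoint_inner_left q _ _

noncomputable def diagStarAlgHom : (H →L[ℂ] H) →⋆ₐ[ℂ] (l2 H →L[ℂ] l2 H) where
  toFun := diagOp
  map_one' := rfl
  map_mul' _ _ := rfl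
  map_zero' := by ext; simp
  map_add' _ _ := by ext; simp
  commutes' c := by ext; simp [Algebra.algebraMap_eq_smul_one, lp.coeFn_smul]
  map_star' q := by simp only [star_eq_adjoint, diagOp_adjoint]

lemma diagOp_mono : Monotone (diagOp : (H →L[ℂ] H) → l2 H →L[ℂ] l2 H) :=
  OrderHomClass.mono (diagStarAlgHom (H := H))

lemma le_riccatiMap {A11 s : H →L[ℂ] H} {A12 : l2 H →L[ℂ] H} {A22 : l2 H →L[ℂ] l2 H}
    (hs : 0 ≤ diagOp s - A22) : A11 ≤ riccatiMap A11 A12 A22 s := by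
  have hP := ((nonneg_iff_isPositive _).mp (ringInverse_nonneg hs)).conj_adjoint A12
  exact le_add_of_nonneg_right ((nonneg_iff_isPositive _).mpr hP)

end HilbertSpace

theorem riccati_seq_well_defined_general
    {H : Type*} [NormedAddCommGroup H] [InnerProductSpace ℂ H] [CompleteSpace H]
    (A11 : H →L[ℂ] H) (A12 : l2 H →L[ℂ] H) (A22 : l2 H →L[ℂ] l2 H)
    (hA11sa : IsSelfAdjoint A11)
    (δ : ℝ) (hδ : 0 < δ) (hgap : δ • (1 : l2 H →L[ℂ] l2 H) ≤ diagOp A11 - A22) :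
    ∀ n : ℕ,
      IsSelfAdjoint (riccatiSeq A11 A12 A22 n) ∧
      A11 ≤ riccatiSeq A11 A12 A22 n ∧
      δ • (1 : l2 H →L[ℂ] l2 H) ≤ diagOp (riccatiSeq A11 A12 A22 n) - A22 ∧
      IsUnit (diagOp (riccatiSeq A11 A12 A22 n) - A22) := by
  have gap_of_ge {s : H →L[ℂ] H} (hs : A11 ≤ s) : δ • 1 ≤ diagOp s - A22 :=
    hgap.trans (sub_le_sub_right (diagOp_mono hs) A22)
  have hge (n : ℕ) : A11 ≤ riccatiSeq A11 A12 A22 n := by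
    induction n with
    | zero => exact le_rfl
    | succ n ih => exact le_riccatiMap (isStrictlyPositive_of_smul_one_le hδ (gap_of_ge ih)).nonneg
  intro n
  exact ⟨(IsSelfAdjoint.iff_of_le (hge n)).mp hA11sa, hge n, gap_of_ge (hge n),
    (isStrictlyPositive_of_smul_one_le hδ (gap_of_ge (hge n))).isUnit⟩

/-- **Well-definedness of the successive approximations.**  If `diag{A₁₁} − A₂₂ ≥ δ·I` with
`δ > 0`, then every iterate `sₙ` is well defined and selfadjoint, `sₙ ≥ A₁₁ = s₀`, and
`diag{sₙ} − A₂₂ ≥ δ·I`; in particular `diag{sₙ} − A₂₂` is strongly positive, hence boundedly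
invertible, and the recursion never breaks down. -/
theorem riccati_seq_well_defined
    {H : Type*} [NormedAddCommGroup H] [InnerProductSpace ℂ H] [CompleteSpace H]
    [TopologicalSpace.SeparableSpace H]
    (A11 : H →L[ℂ] H) (A12 : l2 H →L[ℂ] H) (A22 : l2 H →L[ℂ] l2 H)
    (hA11sa : IsSelfAdjoint A11) (hA22sa : IsSelfAdjoint A22)
    (δ : ℝ) (hδ : 0 < δ) (hgap : δ • (1 : l2 H →L[ℂ] l2 H) ≤ diagOp A11 - A22) :
    ∀ n : ℕ,
      IsSelfAdjoint (riccatiSeq A11 A12 A22 n) ∧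
      A11 ≤ riccatiSeq A11 A12 A22 n ∧
      δ • (1 : l2 H →L[ℂ] l2 H) ≤ diagOp (riccatiSeq A11 A12 A22 n) - A22 ∧
      IsUnit (diagOp (riccatiSeq A11 A12 A22 n) - A22) :=
  riccati_seq_well_defined_general A11 A12 A22 hA11sa δ hδ hgap
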